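/- The polynomial P(x) = (x,x')^6 - (15/44)(x,x')^4(x',x')(x,x) + (15/616)(x,x')^2(x',x')^2(x,x)^2 - (1/4928)(x',x')^3(x,x)^3 on R^36 is harmonic for every fixed x' ∈ R^36. -/

import Mathlib

/-!
Write `s = ⟪x, a⟫` and `q = ⟪x, x⟫` on a real inner product space of dimension `n`. Differentiating
twice along an orthonormal basis and summing gives
`Δ (s ^ k * q ^ m) = k (k - 1) ‖a‖² s ^ (k - 2) q ^ m + 2 m (2k + 2m + n - 2) s ^ k q ^ (m - 1)`.
So `Δ` maps the span of `s⁶, ‖a‖² s⁴ q, ‖a‖⁴ s² q², ‖a‖⁶ q³` into the span of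
`‖a‖² s⁴, ‖a‖⁴ s² q, ‖a‖⁶ q²`, and the triangular system for a combination in the kernel has the
solution `1, -15/(n+8), 45/((n+8)(n+6)), -15/((n+8)(n+6)(n+4))`; for `n = 36` these are
`1, -15/44, 15/616, -1/4928`.
-/

open scoped RealInnerProductSpace
open InnerProductSpace Laplacian

section

variable {E : Type*} [NormedAddCommGroup E] [InnerProductSpace ℝ E]

theorem hasFDerivAt_inner_const (v x : E) :
    HasFDerivAt (fun y : E => ⟪y, v⟫) (innerSL ℝ v) x := by
  convert (innerSL ℝ v).hasFDerivAt using 1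
  ext y
  rw [innerSL_apply_apply, real_inner_comm]

theorem hasFDerivAt_inner_self (x : E) :
    HasFDerivAt (fun y : E => ⟪y, y⟫) ((2 : ℝ) • innerSL ℝ x) x := by
  simpa only [real_inner_self_eq_norm_sq, two_smul] using (hasStrictFDerivAt_norm_sq x).hasFDerivAt

theorem OrthonormalBasis.sum_inner_mul_inner_real {ι : Type*} [Fintype ι]
    (b : OrthonormalBasis ι ℝ E) (y z : E) : ∑ i, ⟪y, b i⟫ * ⟪z, b i⟫ = ⟪y, z⟫ := by
  simpa only [real_inner_comm z] using b.sum_inner_mul_inner y z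

theorem OrthonormalBasis.sum_inner_sq {ι : Type*} [Fintype ι] (b : OrthonormalBasis ι ℝ E)
    (y : E) : ∑ i, ⟪y, b i⟫ ^ 2 = ⟪y, y⟫ := by
  simpa only [sq] using b.sum_inner_mul_inner_real y y

theorem OrthonormalBasis.sum_inner_self {ι : Type*} [Fintype ι] (b : OrthonormalBasis ι ℝ E) :
    ∑ i, ⟪b i, b i⟫ = Fintype.card ι := by
  simp [b.orthonormal.1]

theorem laplacian_eq_sum_fderiv_fderiv [FiniteDimensional ℝ E] {ι : Type*} [Fintype ι]
    {f : E → ℝ} {x : E} (hf : ContDiffAt ℝ 2 f x) (b : OrthonormalBasis ι ℝ E) :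
    Δ f x = ∑ i, fderiv ℝ (fun y => fderiv ℝ f y (b i)) x (b i) := by
  have hdf : DifferentiableAt ℝ (fderiv ℝ f) x :=
    (hf.fderiv_right (m := 1) (by norm_num)).differentiableAt (by norm_num)
  simp [laplacian_eq_iteratedFDeriv_orthonormalBasis f b, iteratedFDeriv_two_apply,
    fderiv_clm_apply hdf (differentiableAt_const _)]

theorem natCast_mul_natCast_sub_one (n : ℕ) : (n : ℝ) * (n - 1 : ℕ) = n * (n - 1) := by
  cases n <;> simp

theorem natCast_mul_mul_pow_sub_one (n : ℕ) (t : ℝ) : n * (t * t ^ (n - 1)) = n * t ^ n := by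
  cases n <;> simp [pow_succ']

def innerMonomial (a : E) (k m : ℕ) (x : E) : ℝ := ⟪x, a⟫ ^ k * ⟪x, x⟫ ^ m

theorem contDiff_innerMonomial (a : E) (k m : ℕ) {n : WithTop ℕ∞} :
    ContDiff ℝ n (innerMonomial a k m) :=
  ((contDiff_id.inner ℝ contDiff_const).pow k).mul ((contDiff_id.inner ℝ contDiff_id).pow m)

/- The truncated exponents `k - 1`, `m - 1`, `k - 2`, `m - 2` below are harmless: whenever one of
them is truncated, its coefficient vanishes. -/
theorem hasFDerivAt_innerMonomial (a x : E) (k m : ℕ) :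
    HasFDerivAt (innerMonomial a k m)
      ((k * innerMonomial a (k - 1) m x) • innerSL ℝ a
        + (2 * m * innerMonomial a k (m - 1) x) • innerSL ℝ x) x := by
  have H : HasFDerivAt (fun y => ⟪y, a⟫ ^ k * ⟪y, y⟫ ^ m) _ x :=
    ((hasFDerivAt_inner_const a x).pow k).mul ((hasFDerivAt_inner_self x).pow m)
  refine H.congr_fderiv (ContinuousLinearMap.ext fun v => ?_)
  simp only [innerMonomial, add_apply, smul_apply, coe_innerSL_apply, smul_eq_mul, nsmul_eq_mul]
  ring

theorem fderiv_innerMonomial_apply (a x v : E) (k m : ℕ) :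
    fderiv ℝ (innerMonomial a k m) x v =
      k * ⟪a, v⟫ * innerMonomial a (k - 1) m x
        + 2 * m * ⟪x, v⟫ * innerMonomial a k (m - 1) x := by
  rw [(hasFDerivAt_innerMonomial a x k m).fderiv]
  simp only [add_apply, smul_apply, innerSL_apply_apply, smul_eq_mul]
  ring

theorem fderiv_fderiv_innerMonomial_apply (a x v : E) (k m : ℕ) :
    fderiv ℝ (fun y => fderiv ℝ (innerMonomial a k m) y v) x v =
      k * (k - 1 : ℕ) * ⟪a, v⟫ ^ 2 * innerMonomial a (k - 2) m x
        + 4 * k * m * (⟪a, v⟫ * ⟪x, v⟫) * innerMonomial a (k - 1) (m - 1) x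
        + 4 * m * (m - 1 : ℕ) * ⟪x, v⟫ ^ 2 * innerMonomial a k (m - 2) x
        + 2 * m * ⟪v, v⟫ * innerMonomial a k (m - 1) x := by
  simp_rw [fderiv_innerMonomial_apply]
  have H : HasFDerivAt (fun y => k * ⟪a, v⟫ * innerMonomial a (k - 1) m y
      + 2 * m * ⟪y, v⟫ * innerMonomial a k (m - 1) y) _ x :=
    ((hasFDerivAt_innerMonomial a x (k - 1) m).const_mul (k * ⟪a, v⟫)).add
      (((hasFDerivAt_inner_const v x).const_mul (2 * m)).mul
        (hasFDerivAt_innerMonomial a x k (m - 1)))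
  rw [H.fderiv]
  simp only [Nat.sub_sub, add_apply, smul_apply, coe_innerSL_apply, smul_eq_mul, smul_add]
  ring

theorem laplacian_innerMonomial [FiniteDimensional ℝ E] (a x : E) (k m : ℕ) :
    Δ (innerMonomial a k m) x =
      k * (k - 1) * ⟪a, a⟫ * innerMonomial a (k - 2) m x
        + 2 * m * (2 * k + 2 * m + Module.finrank ℝ E - 2) * innerMonomial a k (m - 1) x := by
  rw [laplacian_eq_sum_fderiv_fderiv (contDiff_innerMonomial a k m).contDiffAt
    (stdOrthonormalBasis ℝ E)]
  simp only [fderiv_fderiv_innerMonomial_apply, Finset.sum_add_distrib, ← Finset.sum_mul,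
    ← Finset.mul_sum, OrthonormalBasis.sum_inner_sq, OrthonormalBasis.sum_inner_mul_inner_real,
    OrthonormalBasis.sum_inner_self, Fintype.card_fin]
  have hk : (k : ℝ) * (⟪a, x⟫ * innerMonomial a (k - 1) (m - 1) x)
      = k * innerMonomial a k (m - 1) x := by
    rw [real_inner_comm x a, innerMonomial, innerMonomial]
    linear_combination ⟪x, x⟫ ^ (m - 1) * natCast_mul_mul_pow_sub_one k ⟪x, a⟫
  have hm : ((m - 1 : ℕ) : ℝ) * (⟪x, x⟫ * innerMonomial a k (m - 2) x)
      = (m - 1 : ℕ) * innerMonomial a k (m - 1) x := by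
    rw [innerMonomial, innerMonomial, show m - 2 = m - 1 - 1 by omega]
    linear_combination ⟪x, a⟫ ^ k * natCast_mul_mul_pow_sub_one (m - 1) ⟪x, x⟫
  linear_combination ⟪a, a⟫ * innerMonomial a (k - 2) m x * natCast_mul_natCast_sub_one k
    + 4 * m * hk + 4 * m * hm + 4 * innerMonomial a k (m - 1) x * natCast_mul_natCast_sub_one m

noncomputable def zonalHarmonicSix (a : E) : E → ℝ :=
  let n : ℝ := Module.finrank ℝ E
  innerMonomial a 6 0 - (15 / (n + 8) * ⟪a, a⟫) • innerMonomial a 4 1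
    + (45 / ((n + 8) * (n + 6)) * ⟪a, a⟫ ^ 2) • innerMonomial a 2 2
    - (15 / ((n + 8) * (n + 6) * (n + 4)) * ⟪a, a⟫ ^ 3) • innerMonomial a 0 3

theorem contDiff_zonalHarmonicSix (a : E) {n : WithTop ℕ∞} :
    ContDiff ℝ n (zonalHarmonicSix a) := by
  have hC (k m : ℕ) (c : ℝ) : ContDiff ℝ n (c • innerMonomial a k m) :=
    (contDiff_innerMonomial a k m).const_smul c
  exact (((contDiff_innerMonomial a 6 0).sub (hC 4 1 _)).add (hC 2 2 _)).sub (hC 0 3 _)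

theorem laplacian_zonalHarmonicSix [FiniteDimensional ℝ E] (a x : E) :
    Δ (zonalHarmonicSix a) x = 0 := by
  have hC (k m : ℕ) : ContDiffAt ℝ 2 (innerMonomial a k m) x :=
    (contDiff_innerMonomial a k m).contDiffAt
  have hC' (k m : ℕ) (c : ℝ) : ContDiffAt ℝ 2 (c • innerMonomial a k m) x :=
    (hC k m).const_smul c
  rw [zonalHarmonicSix, ContDiffAt.laplacian_sub _ (hC' 0 3 _),
    ContDiffAt.laplacian_add _ (hC' 2 2 _), ContDiffAt.laplacian_sub (hC 6 0) (hC' 4 1 _),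
    laplacian_smul _ (hC 4 1), laplacian_smul _ (hC 2 2), laplacian_smul _ (hC 0 3)]
  · simp only [laplacian_innerMonomial, innerMonomial, smul_eq_mul]
    field_simp
    ring
  · exact (hC 6 0).sub (hC' 4 1 _)
  · exact ((hC 6 0).sub (hC' 4 1 _)).add (hC' 2 2 _)

end

/-- the degree-6 polynomial on ℝ³⁶ is harmonic for every fixed x'. -/
theorem harmonic_deg6_dim36 (x' : EuclideanSpace ℝ (Fin 36)) :
    let P : EuclideanSpace ℝ (Fin 36) → ℝ := fun x =>
      ⟪x, x'⟫ ^ 6 - (15 / 44) * ⟪x, x'⟫ ^ 4 * ⟪x', x'⟫ * ⟪x, x⟫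
        + (15 / 616) * ⟪x, x'⟫ ^ 2 * ⟪x', x'⟫ ^ 2 * ⟪x, x⟫ ^ 2
        - (1 / 4928) * ⟪x', x'⟫ ^ 3 * ⟪x, x⟫ ^ 3
    ∀ x : EuclideanSpace ℝ (Fin 36),
      (∑ i : Fin 36,
        fderiv ℝ (fun y => fderiv ℝ P y (EuclideanSpace.single i 1)) x
          (EuclideanSpace.single i 1)) = 0 := by
  intro P x
  have hP : P = zonalHarmonicSix x' := by
    funext y
    simp only [P, zonalHarmonicSix, innerMonomial, finrank_euclideanSpace_fin, Pi.add_apply,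
      Pi.sub_apply, Pi.smul_apply, smul_eq_mul]
    ring
  have hΔ := laplacian_eq_sum_fderiv_fderiv (contDiff_zonalHarmonicSix x').contDiffAt
    (EuclideanSpace.basisFun (Fin 36) ℝ) (x := x)
  simpa only [hP, laplacian_zonalHarmonicSix, EuclideanSpace.basisFun_apply, eq_comm] using hΔ
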